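/- Suppose τ𝒳 = 𝒳. Let M be an object of 𝖳, let M → X_M → P → ΣM be a distinguished triangle in which M → X_M is an 𝒳-preenvelope, and let Σ^{-1}P → W → X^P → P be a distinguished triangle in which X^P → P is an 𝒳-precover. Then M and W become isomorphic in the quotient by 𝒳: there exist morphisms f : M → W and g : W → M such that id_M − g∘f factors through an object of 𝒳 and id_W − f∘g factors through an object of 𝒳. (This expresses the natural isomorphism ωσ ≅ id underlying Theorem 2.3: if τ𝒳 = 𝒳, then the pretriangulated quotient category 𝖳_𝒳 is triangulated.) -/

import Mathlib

/-!
The preenvelope triangle `M → X_M → P → ΣM` has a "ghost" connecting map: every morphism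
`X → P` with `X ∈ 𝒳` composes to zero with `P → ΣM`. By Serre duality it suffices that
`P → ΣM → SX` vanishes for all such `X`; shifting back, a map `ΣM → SX = Σ(τX)` is the shift of
a map `M → τX`, which factors through the preenvelope since `τX ∈ 𝒳`, and `P → ΣM → ΣX_M` is
zero. Hence the precover `X^P → P` factors through `X_M → P` and conversely, and completing
the identity of `P` to morphisms of triangles in both directions gives `f : M → W` and
`g : W → M`. Both composites are endomorphisms of triangles that are the identity on `P`, so
`1 - g ∘ f` kills the connecting map and therefore factors through `M → X_M`; likewise for
`1 - f ∘ g` and `W → X^P`.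
-/

open CategoryTheory CategoryTheory.Limits CategoryTheory.Pretriangulated

/-- A morphism factors through (some object of) the class `𝒳`. -/
def FactorsThroughClass {C : Type*} [Category C] (𝒳 : Set C) {A B : C} (f : A ⟶ B) : Prop :=
  ∃ (X : C) (g : A ⟶ X) (h : X ⟶ B), X ∈ 𝒳 ∧ g ≫ h = f

/-- `f : A ⟶ B` is an `𝒳`-monomorphism: every morphism from `A` to an object of `𝒳`
factors through `f`. -/
def XMono {C : Type*} [Category C] (𝒳 : Set C) {A B : C} (f : A ⟶ B) : Prop :=
  ∀ (X : C), X ∈ 𝒳 → ∀ (g : A ⟶ X), ∃ h : B ⟶ X, f ≫ h = g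

/-- `f : A ⟶ B` is an `𝒳`-epimorphism: every morphism from an object of `𝒳` to `B`
factors through `f`. -/
def XEpi {C : Type*} [Category C] (𝒳 : Set C) {A B : C} (f : A ⟶ B) : Prop :=
  ∀ (X : C), X ∈ 𝒳 → ∀ (g : X ⟶ B), ∃ h : X ⟶ A, h ≫ f = g

/-- The data of a Serre functor `S` on a `k`-linear category: a `k`-linear autoequivalence
together with isomorphisms `Hom(A,B) ≅ Hom(B, S A)^∨`, natural in `A` and `B`. -/
structure SerreFunctorData (k : Type*) [Field k] (C : Type*) [Category C]
    [Preadditive C] [Linear k C] where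
  S : C ⥤ C
  additive : S.Additive
  linear : S.Linear k
  isEquivalence : S.IsEquivalence
  pairing : ∀ A B : C, (A ⟶ B) ≃ₗ[k] Module.Dual k (B ⟶ S.obj A)
  natB : ∀ {A B B' : C} (f : A ⟶ B) (g : B ⟶ B') (h : B' ⟶ S.obj A),
    pairing A B' (f ≫ g) h = pairing A B f (g ≫ h)
  natA : ∀ {A A' B : C} (e : A' ⟶ A) (f : A ⟶ B) (h : B ⟶ S.obj A'),
    pairing A' B (e ≫ f) h = pairing A B f (h ≫ S.map e)

namespace SerreFunctorData

variable {k : Type*} [Field k] {C : Type*} [Category C] [Preadditive C] [Linear k C]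

lemma comp_eq_zero_of_forall_comp_eq_zero (SD : SerreFunctorData k C) {X Z N : C}
    (u : X ⟶ Z) (h : Z ⟶ N) (hh : ∀ v : N ⟶ SD.S.obj X, h ≫ v = 0) : u ≫ h = 0 := by
  apply (SD.pairing X N).injective
  ext v
  rw [SD.natB, hh, map_zero, map_zero, LinearMap.zero_apply]

end SerreFunctorData

namespace CategoryTheory.Pretriangulated

variable {C : Type*} [Category C] [Preadditive C] [HasZeroObject C] [HasShift C ℤ]
  [∀ n : ℤ, (CategoryTheory.shiftFunctor C n).Additive] [Pretriangulated C]

lemma Triangle.yoneda_exact₁ (T : Triangle C) (hT : T ∈ distTriang C) {Y : C}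
    (u : T.obj₁ ⟶ Y) (hu : T.mor₃ ≫ u⟦(1 : ℤ)⟧' = 0) : ∃ w : T.obj₂ ⟶ Y, u = T.mor₁ ≫ w := by
  obtain ⟨w, hw, -⟩ := complete_distinguished_triangle_morphism₂ T _ hT
    (contractible_distinguished Y) u 0 (hu.trans zero_comp.symm)
  exact ⟨w, (hw.trans (Category.comp_id u)).symm⟩

lemma Triangle.mor₃_comp_shift_eq_zero_of_xMono (T : Triangle C) (hT : T ∈ distTriang C)
    {𝒳 : Set C} (hmono : XMono 𝒳 T.mor₁) {Y : C} (hY : Y ∈ 𝒳)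
    (v : T.obj₁⟦(1 : ℤ)⟧ ⟶ Y⟦(1 : ℤ)⟧) : T.mor₃ ≫ v = 0 := by
  obtain ⟨w, hw⟩ := hmono Y hY ((CategoryTheory.shiftFunctor C (1 : ℤ)).preimage v)
  rw [← (CategoryTheory.shiftFunctor C (1 : ℤ)).map_preimage v, ← hw, Functor.map_comp,
    comp_distTriang_mor_zero₃₁_assoc _ hT, zero_comp]

lemma Triangle.comp_mor₃_eq_zero_of_xMono {k : Type*} [Field k] [Linear k C]
    (SD : SerreFunctorData k C) {𝒳 : Set C}
    (hτ : ∀ X ∈ 𝒳, (SD.S.obj X)⟦(-1 : ℤ)⟧ ∈ 𝒳)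
    (T : Triangle C) (hT : T ∈ distTriang C) (hmono : XMono 𝒳 T.mor₁)
    {X : C} (hX : X ∈ 𝒳) (u : X ⟶ T.obj₃) : u ≫ T.mor₃ = 0 := by
  refine SD.comp_eq_zero_of_forall_comp_eq_zero u T.mor₃ fun v => ?_
  let ε := (shiftFunctorCompIsoId C (-1 : ℤ) 1 (by norm_num)).app (SD.S.obj X)
  calc T.mor₃ ≫ v = (T.mor₃ ≫ v ≫ ε.inv) ≫ ε.hom := by simp
    _ = 0 := by rw [T.mor₃_comp_shift_eq_zero_of_xMono hT hmono (hτ X hX), zero_comp]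

lemma exists_mor₃_comp_shift_eq {A B A' B' P : C}
    {m₁ : A ⟶ B} {m₂ : B ⟶ P} {m₃ : P ⟶ A⟦(1 : ℤ)⟧}
    {m₁' : A' ⟶ B'} {m₂' : B' ⟶ P} {m₃' : P ⟶ A'⟦(1 : ℤ)⟧}
    (hT : Triangle.mk m₁ m₂ m₃ ∈ distTriang C) (hT' : Triangle.mk m₁' m₂' m₃' ∈ distTriang C)
    (q : B ⟶ B') (hq : q ≫ m₂' = m₂) : ∃ f : A ⟶ A', m₃ ≫ f⟦(1 : ℤ)⟧' = m₃' := by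
  obtain ⟨f, -, hf⟩ := complete_distinguished_triangle_morphism₁ _ _ hT hT' q (𝟙 P)
    ((Category.comp_id m₂).trans hq.symm)
  exact ⟨f, hf.trans (Category.id_comp m₃')⟩

lemma factorsThroughClass_id_sub {A B Z : C} {m₁ : A ⟶ B} {m₂ : B ⟶ Z} {m₃ : Z ⟶ A⟦(1 : ℤ)⟧}
    (hT : Triangle.mk m₁ m₂ m₃ ∈ distTriang C) {𝒳 : Set C} (hB : B ∈ 𝒳)
    (φ : A ⟶ A) (hφ : m₃ ≫ φ⟦(1 : ℤ)⟧' = m₃) : FactorsThroughClass 𝒳 (𝟙 A - φ) := by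
  have hu : m₃ ≫ (𝟙 A - φ)⟦(1 : ℤ)⟧' = 0 := by
    rw [Functor.map_sub, Functor.map_id, Preadditive.comp_sub, Category.comp_id, hφ, sub_self]
  obtain ⟨w, hw⟩ := Triangle.yoneda_exact₁ _ hT (𝟙 A - φ) hu
  exact ⟨B, m₁, w, hB, hw.symm⟩

end CategoryTheory.Pretriangulated

theorem omega_sigma_iso_id_in_quotient
    (k : Type*) [Field k] [IsAlgClosed k]
    {C : Type*} [Category C] [Preadditive C] [Linear k C] [HasZeroObject C]
    [HasShift C ℤ] [∀ n : ℤ, (CategoryTheory.shiftFunctor C n).Additive]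
    [Pretriangulated C] [HasBinaryBiproducts C]
    [∀ A B : C, FiniteDimensional k (A ⟶ B)] [IsIdempotentComplete C]
    (SD : SerreFunctorData k C)
    (𝒳 : Set C)
    (hiso : ∀ {A B : C}, (A ≅ B) → A ∈ 𝒳 → B ∈ 𝒳)
    (hsum : ∀ {A B : C}, A ∈ 𝒳 → B ∈ 𝒳 → (A ⊞ B) ∈ 𝒳)
    (hsummand : ∀ {A B : C} (i : A ⟶ B) (r : B ⟶ A), i ≫ r = 𝟙 A → B ∈ 𝒳 → A ∈ 𝒳)
    -- `τ𝒳 = 𝒳`, where `τ = Σ⁻¹ ∘ S`: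
    (hτ : ∀ X : C, X ∈ 𝒳 ↔ ((SD.S.obj X)⟦(-1 : ℤ)⟧) ∈ 𝒳)
    -- the distinguished triangle `M → X_M → P → ΣM` with `M → X_M` an `𝒳`-preenvelope:
    (M XM P : C) (e : M ⟶ XM) (gP : XM ⟶ P) (hP : P ⟶ M⟦(1 : ℤ)⟧)
    (hXM : XM ∈ 𝒳) (he : XMono 𝒳 e)
    (hT : Triangle.mk e gP hP ∈ distTriang C)
    -- the distinguished triangle `Σ⁻¹P → W → X^P → P`, in rotated form `W → X^P → P → ΣW`,
    -- with `X^P → P` an `𝒳`-precover: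
    (W XP : C) (a : W ⟶ XP) (p : XP ⟶ P) (δ : P ⟶ W⟦(1 : ℤ)⟧)
    (hXP : XP ∈ 𝒳) (hp : XEpi 𝒳 p)
    (hT' : Triangle.mk a p δ ∈ distTriang C) :
    ∃ (f : M ⟶ W) (g : W ⟶ M),
      FactorsThroughClass 𝒳 (𝟙 M - f ≫ g) ∧ FactorsThroughClass 𝒳 (𝟙 W - g ≫ f) := by
  obtain ⟨q, hq⟩ := hp XM hXM gP
  obtain ⟨f, hf⟩ := exists_mor₃_comp_shift_eq hT hT' q hq
  have hp_ghost : p ≫ hP = 0 :=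
    Triangle.comp_mor₃_eq_zero_of_xMono SD (fun X hX => (hτ X).mp hX) _ hT he hXP p
  obtain ⟨r, hr⟩ := Triangle.coyoneda_exact₃ _ hT p hp_ghost
  obtain ⟨g, hg⟩ := exists_mor₃_comp_shift_eq hT' hT r hr.symm
  exact ⟨f, g,
    factorsThroughClass_id_sub hT hXM (f ≫ g) (by rw [Functor.map_comp, reassoc_of% hf, hg]),
    factorsThroughClass_id_sub hT' hXP (g ≫ f) (by rw [Functor.map_comp, reassoc_of% hg, hf])⟩
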